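/- arXiv:2605.07711 — 3 statements merged into one kernel-verified Lean document; each statement's English description precedes it below -/
import Mathlib

section
/- Let B_T and B_S be the boundary sets of two partitions of [0,L) (finite sets of integers each containing 0 and L). Define a graph G on the atomic fragments determined by B_T ∪ B_S, where two fragments are adjacent iff they lie inside the same B_T-span or the same B_S-span. Then every connected component of G is a set of consecutive fragments, i.e., its union is an interval [a,b) with a,b ∈ B_T ∩ B_S. -/
/-!
A common boundary `c ∈ BT ∩ BS` is never crossed by a span of either tokenizer, so the
fragments between two consecutive common boundaries `a < b` are closed under adjacency.
Conversely, each fragment `y` in `[a, b)` other than the first one is adjacent to its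
predecessor `z`: since `y` is not a common boundary, it is missing from one of the two
boundary sets, and the span of that tokenizer containing `z` also contains `y`.
-/

open Finset

/-- Two fragments with left endpoints `x` and `y` lie inside the same token span of
the tokenizer with boundary set `C` iff no boundary of `C` lies in `(min x y, max x y]`. -/
def sameSpan (C : Finset ℕ) (x y : ℕ) : Prop :=
  ∀ t ∈ C, ¬ (min x y < t ∧ t ≤ max x y)

/-- The fragment graph of the aligned-unit construction. Vertices are the atomic
fragments of `[0, L)` determined by the union of the teacher boundaries `BT` and the
student boundaries `BS` (a fragment is identified with its left endpoint, an element
of `BT ∪ BS` smaller than `L`). Two distinct fragments are adjacent iff they lie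
inside the same teacher span or the same student span. -/
def fragGraph (BT BS : Finset ℕ) (L : ℕ) :
    SimpleGraph {x : ℕ // x ∈ BT ∪ BS ∧ x < L} where
  Adj u v := u ≠ v ∧ (sameSpan BT u.1 v.1 ∨ sameSpan BS u.1 v.1)
  symm := by
    constructor
    intro u v h
    refine ⟨h.1.symm, ?_⟩
    rcases h.2 with h' | h'
    · exact Or.inl fun t ht hc => h' t ht (by rwa [min_comm, max_comm] at hc)
    · exact Or.inr fun t ht hc => h' t ht (by rwa [min_comm, max_comm] at hc)
  loopless := ⟨fun u h => h.1 rfl⟩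

section LinearOrder

variable {α : Type*} [LinearOrder α]

lemma exists_mem_Ico_forall_notMem_Ioo {D : Finset α} {a₀ b₀ j : α} (ha₀ : a₀ ∈ D)
    (hb₀ : b₀ ∈ D) (hj : j ∈ Set.Ico a₀ b₀) :
    ∃ a ∈ D, ∃ b ∈ D, j ∈ Set.Ico a b ∧ ∀ t ∈ Set.Ioo a b, t ∉ D := by
  obtain ⟨a, ha, hamax⟩ :=
    (D.filter (· ≤ j)).exists_max_image id ⟨a₀, by simp [ha₀, hj.1]⟩
  obtain ⟨b, hb, hbmin⟩ :=
    (D.filter (j < ·)).exists_min_image id ⟨b₀, by simp [hb₀, hj.2]⟩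
  simp only [mem_filter, id, and_imp] at ha hb hamax hbmin
  refine ⟨a, ha.1, b, hb.1, ⟨ha.2, hb.2⟩, fun t ⟨hat, htb⟩ htD => ?_⟩
  rcases le_or_gt t j with htj | hjt
  · exact (hamax t htD htj).not_gt hat
  · exact (hbmin t htD hjt).not_gt htb

lemma exists_max_lt {s : Finset α} {x y : α} (hx : x ∈ s) (hxy : x < y) :
    ∃ z ∈ s, x ≤ z ∧ z < y ∧ ∀ t ∈ s, t < y → t ≤ z := by
  obtain ⟨z, hz, hzmax⟩ := (s.filter (· < y)).exists_max_image id ⟨x, by simp [hx, hxy]⟩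
  simp only [mem_filter, id, and_imp] at hz hzmax
  exact ⟨z, hz.1, hzmax x hx hxy, hz.2, hzmax⟩

end LinearOrder

lemma sameSpan.mem_Ico {C : Finset ℕ} {a b x y : ℕ} (h : sameSpan C x y) (ha : a ∈ C)
    (hb : b ∈ C) (hx : x ∈ Set.Ico a b) : y ∈ Set.Ico a b := by
  have hna := h a ha
  have hnb := h b hb
  simp only [Set.mem_Ico] at hx ⊢
  omega

lemma sameSpan_of_forall_lt_le {C : Finset ℕ} {z y : ℕ} (hzy : z ≤ y) (hy : y ∉ C)
    (hC : ∀ t ∈ C, t < y → t ≤ z) : sameSpan C z y := by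
  rintro t ht ⟨hzt, hty⟩
  rw [min_eq_left hzy] at hzt
  rw [max_eq_right hzy] at hty
  rcases hty.lt_or_eq with hty | rfl
  · exact (hC t ht hty).not_gt hzt
  · exact hy ht

lemma fragGraph_reachable_mem_Ico {BT BS : Finset ℕ} {L a b : ℕ} (ha : a ∈ BT ∩ BS)
    (hb : b ∈ BT ∩ BS) {u v : {x : ℕ // x ∈ BT ∪ BS ∧ x < L}}
    (huv : (fragGraph BT BS L).Reachable u v) (hu : u.1 ∈ Set.Ico a b) :
    v.1 ∈ Set.Ico a b := by
  rw [mem_inter] at ha hb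
  rw [SimpleGraph.reachable_iff_reflTransGen] at huv
  induction huv with
  | refl => exact hu
  | tail _ hadj ih =>
    rcases hadj.2 with h | h
    · exact h.mem_Ico ha.1 hb.1 ih
    · exact h.mem_Ico ha.2 hb.2 ih

lemma fragGraph_reachable_of_le {BT BS : Finset ℕ} {L a b : ℕ}
    (hgap : ∀ t ∈ Set.Ioo a b, t ∉ BT ∩ BS) (x y : {x : ℕ // x ∈ BT ∪ BS ∧ x < L})
    (hax : a ≤ x.1) (hxy : x.1 ≤ y.1) (hyb : y.1 < b) :
    (fragGraph BT BS L).Reachable x y := by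
  obtain ⟨y, hy⟩ := y
  induction y using Nat.strong_induction_on with
  | _ y ih =>
    rcases hxy.eq_or_lt with hxy | hxy
    · obtain rfl : x = ⟨y, hy⟩ := Subtype.ext hxy
      exact .refl _
    obtain ⟨z, hz, hxz, hzy, hzmax⟩ := exists_max_lt x.2.1 hxy
    have hyD : y ∉ BT ∩ BS := hgap y ⟨hax.trans_lt hxy, hyb⟩
    have hspan : sameSpan BT z y ∨ sameSpan BS z y := by
      by_cases hyT : y ∈ BT
      · exact .inr <| sameSpan_of_forall_lt_le hzy.le (fun hyS => hyD (mem_inter.2 ⟨hyT, hyS⟩))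
          fun t ht => hzmax t (mem_union_right _ ht)
      · exact .inl <| sameSpan_of_forall_lt_le hzy.le hyT
          fun t ht => hzmax t (mem_union_left _ ht)
    let z' : {x : ℕ // x ∈ BT ∪ BS ∧ x < L} := ⟨z, hz, hzy.trans hy.2⟩
    have hadj : (fragGraph BT BS L).Adj z' ⟨y, hy⟩ :=
      ⟨fun h => hzy.ne (congrArg Subtype.val h), hspan⟩
    exact (ih z hzy z'.2 hxz (hzy.trans hyb)).trans hadj.reachable

theorem stmt4_general (L : ℕ) (BT BS : Finset ℕ)
    (h0T : 0 ∈ BT) (hLT : L ∈ BT) (h0S : 0 ∈ BS) (hLS : L ∈ BS) :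
    ∀ j : {x : ℕ // x ∈ BT ∪ BS ∧ x < L},
      ∃ a b : ℕ, a ∈ BT ∩ BS ∧ b ∈ BT ∩ BS ∧ a < b ∧
        ∀ j' : {x : ℕ // x ∈ BT ∪ BS ∧ x < L},
          (fragGraph BT BS L).Reachable j j' ↔ (a ≤ j'.1 ∧ j'.1 < b) := by
  intro j
  obtain ⟨a, ha, b, hb, hj, hgap⟩ := exists_mem_Ico_forall_notMem_Ioo
    (mem_inter.2 ⟨h0T, h0S⟩) (mem_inter.2 ⟨hLT, hLS⟩) ⟨Nat.zero_le j.1, j.2.2⟩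
  refine ⟨a, b, ha, hb, hj.1.trans_lt hj.2, fun j' =>
    ⟨fun h => fragGraph_reachable_mem_Ico ha hb h hj, fun hj' => ?_⟩⟩
  rcases le_total j.1 j'.1 with h | h
  · exact fragGraph_reachable_of_le hgap j j' hj.1 h hj'.2
  · exact (fragGraph_reachable_of_le hgap j' j hj'.1 h hj.2).symm

/-- **Connected components of the fragment graph are intervals with common-boundary
endpoints.** For any fragment `j`, there are common boundaries `a < b`
(`a, b ∈ BT ∩ BS`) such that a fragment `j'` is reachable from `j` exactly when its
span `[j', next j')` lies inside `[a, b)` (equivalently `a ≤ j' < b`): the component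
is a set of consecutive fragments whose union is the interval `[a, b)`. -/
theorem stmt4 (L : ℕ) (BT BS : Finset ℕ)
    (h0T : 0 ∈ BT) (hLT : L ∈ BT) (h0S : 0 ∈ BS) (hLS : L ∈ BS)
    (hTle : ∀ x ∈ BT, x ≤ L) (hSle : ∀ x ∈ BS, x ≤ L) :
    ∀ j : {x : ℕ // x ∈ BT ∪ BS ∧ x < L},
      ∃ a b : ℕ, a ∈ BT ∩ BS ∧ b ∈ BT ∩ BS ∧ a < b ∧
        ∀ j' : {x : ℕ // x ∈ BT ∪ BS ∧ x < L},
          (fragGraph BT BS L).Reachable j j' ↔ (a ≤ j'.1 ∧ j'.1 < b) :=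
  stmt4_general L BT BS h0T hLT h0S hLS
end

section
/- Minimality of aligned units: let u be a connected component of the fragment graph G covering the interval [a,b). Then there is no interior point z with a < z < b such that z ∈ B_T ∩ B_S. Consequently u admits no decomposition into two nonempty consecutive pieces each of which is jointly tokenizable. -/
open Finset

/-!
A common boundary `z ∈ BT ∩ BS` ends a teacher span and a student span at once, so no edge
of the fragment graph joins a fragment left of `z` to one right of `z`. A connected component
therefore lies on one side of `z`, and cannot contain both the fragment at `a` and the one at `z`.
-/

theorem sameSpan.lt_iff_lt {C : Finset ℕ} {x y z : ℕ} (h : sameSpan C x y) (hz : z ∈ C) :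
    x < z ↔ y < z := by
  have := h z hz
  omega

theorem fragGraph_adj_lt_iff_lt {BT BS : Finset ℕ} {L z : ℕ} (hzT : z ∈ BT) (hzS : z ∈ BS)
    {u v : {x : ℕ // x ∈ BT ∪ BS ∧ x < L}} (h : (fragGraph BT BS L).Adj u v) :
    u.1 < z ↔ v.1 < z :=
  h.2.elim (·.lt_iff_lt hzT) (·.lt_iff_lt hzS)

theorem fragGraph_reachable_lt_iff_lt {BT BS : Finset ℕ} {L z : ℕ} (hzT : z ∈ BT)
    (hzS : z ∈ BS) {u v : {x : ℕ // x ∈ BT ∪ BS ∧ x < L}}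
    (h : (fragGraph BT BS L).Reachable u v) : u.1 < z ↔ v.1 < z := by
  obtain ⟨w⟩ := h
  induction w with
  | nil => rfl
  | cons hadj _ ih => exact (fragGraph_adj_lt_iff_lt hzT hzS hadj).trans ih

theorem stmt6_general (L : ℕ) (BT BS : Finset ℕ)
    (hTle : ∀ x ∈ BT, x ≤ L) (hSle : ∀ x ∈ BS, x ≤ L)
    (j : {x : ℕ // x ∈ BT ∪ BS ∧ x < L}) (a b : ℕ)
    (ha : a ∈ BT ∪ BS) (hb : b ∈ BT ∪ BS)
    (hcomp : ∀ j' : {x : ℕ // x ∈ BT ∪ BS ∧ x < L},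
      (fragGraph BT BS L).Reachable j j' ↔ (a ≤ j'.1 ∧ j'.1 < b)) :
    (∀ z ∈ BT ∩ BS, ¬ (a < z ∧ z < b)) ∧
    ¬ ∃ z : ℕ, (a < z ∧ z < b) ∧ z ∈ BT ∧ z ∈ BS := by
  have hbL : b ≤ L := (mem_union.mp hb).elim (hTle b) (hSle b)
  have no_common_interior : ∀ z ∈ BT ∩ BS, ¬ (a < z ∧ z < b) := by
    rintro z hz ⟨haz, hzb⟩
    obtain ⟨hzT, hzS⟩ := mem_inter.mp hz
    let va : {x : ℕ // x ∈ BT ∪ BS ∧ x < L} := ⟨a, ha, by omega⟩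
    let vz : {x : ℕ // x ∈ BT ∪ BS ∧ x < L} := ⟨z, mem_union_left _ hzT, by omega⟩
    have hra : (fragGraph BT BS L).Reachable j va := (hcomp va).mpr ⟨le_rfl, haz.trans hzb⟩
    have hrz : (fragGraph BT BS L).Reachable j vz := (hcomp vz).mpr ⟨haz.le, hzb⟩
    exact lt_irrefl z ((fragGraph_reachable_lt_iff_lt hzT hzS (hra.symm.trans hrz)).mp haz)
  exact ⟨no_common_interior, fun ⟨z, hzab, hzT, hzS⟩ => no_common_interior z (mem_inter.mpr ⟨hzT, hzS⟩) hzab⟩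

/-- **Minimality of aligned units.** Let the connected component of a fragment `j`
cover the interval `[a, b)` (with boundary points `a, b`). Then no interior point
`z` with `a < z < b` is a common boundary (`z ∈ BT ∩ BS`); consequently the unit
admits no decomposition into two nonempty consecutive pieces that are each jointly
tokenizable (which would require a common boundary strictly inside `(a, b)`). -/
theorem stmt6 (L : ℕ) (BT BS : Finset ℕ)
    (h0T : 0 ∈ BT) (hLT : L ∈ BT) (h0S : 0 ∈ BS) (hLS : L ∈ BS)
    (hTle : ∀ x ∈ BT, x ≤ L) (hSle : ∀ x ∈ BS, x ≤ L)
    (j : {x : ℕ // x ∈ BT ∪ BS ∧ x < L}) (a b : ℕ)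
    (ha : a ∈ BT ∪ BS) (hb : b ∈ BT ∪ BS)
    (hcomp : ∀ j' : {x : ℕ // x ∈ BT ∪ BS ∧ x < L},
      (fragGraph BT BS L).Reachable j j' ↔ (a ≤ j'.1 ∧ j'.1 < b)) :
    (∀ z ∈ BT ∩ BS, ¬ (a < z ∧ z < b)) ∧
    ¬ ∃ z : ℕ, (a < z ∧ z < b) ∧ z ∈ BT ∧ z ∈ BS :=
  stmt6_general L BT BS hTle hSle j a b ha hb hcomp
end

section
/- The intersection B_T ∩ B_S of the two boundary sets (which always contains 0 and L) induces a partition of [0,L) into intervals, and this partition coincides exactly with the partition into connected components of the fragment graph G. In particular, the minimal aligned units are precisely the intervals between consecutive common boundaries. -/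
open Finset

/-!
Reachability in the fragment graph is the equivalence relation generated by "same teacher
span" and "same student span". Each of these refines "same common span", so reachable fragments
are not separated by a common boundary. Conversely, if no common boundary lies in `(x, y]`,
step from `x` to the next boundary `n ∈ BT ∪ BS`: since `n` is missing from `BT` or from `BS`,
the fragments at `x` and `n` share a span of that tokenizer, and we conclude by induction on
`y - x`.
-/

section sameSpan

variable {C D : Finset ℕ} {x y z n : ℕ}

lemma sameSpan_refl (C : Finset ℕ) (x : ℕ) : sameSpan C x x :=
  fun _ _ _ => by omega

lemma sameSpan.symm (h : sameSpan C x y) : sameSpan C y x :=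
  fun t ht => by rw [min_comm, max_comm]; exact h t ht

lemma sameSpan.trans (h₁ : sameSpan C x y) (h₂ : sameSpan C y z) : sameSpan C x z := by
  intro t ht
  have := h₁ t ht
  have := h₂ t ht
  omega

lemma sameSpan.mono (hCD : C ⊆ D) (h : sameSpan D x y) : sameSpan C x y :=
  fun t ht => h t (hCD ht)

lemma sameSpan.of_le_of_le (hxy : x ≤ y) (hyz : y ≤ z) (h : sameSpan C x z) :
    sameSpan C y z := by
  intro t ht
  have := h t ht
  omega

lemma sameSpan_or_sameSpan_of_isLeast (hnCD : n ∉ C ∩ D) (hxn : x < n)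
    (hleast : ∀ t ∈ C ∪ D, x < t → n ≤ t) : sameSpan C x n ∨ sameSpan D x n := by
  have of_not_mem : ∀ E ⊆ C ∪ D, n ∉ E → sameSpan E x n := fun E hE hnE t ht hxt => by
    have := hleast t (hE ht) (by omega)
    exact hnE (by rwa [show t = n by omega] at ht)
  by_cases hnC : n ∈ C
  · exact .inr (of_not_mem D subset_union_right fun hnD => hnCD (mem_inter.2 ⟨hnC, hnD⟩))
  · exact .inl (of_not_mem C subset_union_left hnC)

end sameSpan

namespace fragGraph

variable {BT BS : Finset ℕ} {L : ℕ}

lemma sameSpan_inter_of_adj {u v : {x : ℕ // x ∈ BT ∪ BS ∧ x < L}}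
    (h : (fragGraph BT BS L).Adj u v) : sameSpan (BT ∩ BS) u.1 v.1 :=
  h.2.elim (·.mono inter_subset_left) (·.mono inter_subset_right)

lemma sameSpan_inter_of_reachable {u v : {x : ℕ // x ∈ BT ∪ BS ∧ x < L}}
    (h : (fragGraph BT BS L).Reachable u v) : sameSpan (BT ∩ BS) u.1 v.1 := by
  rw [SimpleGraph.reachable_iff_reflTransGen] at h
  induction h with
  | refl => exact sameSpan_refl _ _
  | tail _ hadj ih => exact ih.trans (sameSpan_inter_of_adj hadj)

lemma reachable_of_sameSpan_inter_of_le {u v : {x : ℕ // x ∈ BT ∪ BS ∧ x < L}}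
    (huv : u.1 ≤ v.1) (h : sameSpan (BT ∩ BS) u.1 v.1) : (fragGraph BT BS L).Reachable u v := by
  induction hd : v.1 - u.1 using Nat.strong_induction_on generalizing u with
  | _ d ih =>
    rcases huv.eq_or_lt with heq | hlt
    · exact Subtype.ext heq ▸ .refl u
    obtain ⟨n, hn, hleast⟩ := ((BT ∪ BS).filter (u.1 < ·)).exists_min_image id
      ⟨v.1, mem_filter.2 ⟨v.2.1, hlt⟩⟩
    obtain ⟨hnB, hun⟩ := mem_filter.1 hn
    have hleast' : ∀ t ∈ BT ∪ BS, u.1 < t → n ≤ t := fun t ht hut =>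
      hleast t (mem_filter.2 ⟨ht, hut⟩)
    have hnv : n ≤ v.1 := hleast' v.1 v.2.1 hlt
    let w : {x : ℕ // x ∈ BT ∪ BS ∧ x < L} := ⟨n, hnB, hnv.trans_lt v.2.2⟩
    have hnCD : n ∉ BT ∩ BS := fun hmem => h n hmem (by omega)
    have hadj : (fragGraph BT BS L).Adj u w :=
      ⟨fun huw => hun.ne (congrArg Subtype.val huw),
        sameSpan_or_sameSpan_of_isLeast hnCD hun hleast'⟩
    exact hadj.reachable.trans
      (ih (v.1 - n) (by omega) hnv (h.of_le_of_le hun.le hnv) rfl)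

lemma reachable_iff_sameSpan_inter (u v : {x : ℕ // x ∈ BT ∪ BS ∧ x < L}) :
    (fragGraph BT BS L).Reachable u v ↔ sameSpan (BT ∩ BS) u.1 v.1 := by
  refine ⟨sameSpan_inter_of_reachable, fun h => ?_⟩
  rcases le_total u.1 v.1 with huv | hvu
  · exact reachable_of_sameSpan_inter_of_le huv h
  · exact (reachable_of_sameSpan_inter_of_le hvu h.symm).symm

end fragGraph

theorem stmt7_general (L : ℕ) (BT BS : Finset ℕ) :
    ∀ j j' : {x : ℕ // x ∈ BT ∪ BS ∧ x < L},
      (fragGraph BT BS L).Reachable j j' ↔ sameSpan (BT ∩ BS) j.1 j'.1 :=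
  fragGraph.reachable_iff_sameSpan_inter

/-- **Components coincide with the partition induced by common boundaries.** Two
fragments are in the same connected component of the fragment graph iff no common
boundary (element of `BT ∩ BS`) separates them, i.e. iff they lie in the same
interval between consecutive common boundaries. Hence the minimal aligned units are
precisely the intervals between consecutive common boundaries. -/
theorem stmt7 (L : ℕ) (BT BS : Finset ℕ)
    (h0T : 0 ∈ BT) (hLT : L ∈ BT) (h0S : 0 ∈ BS) (hLS : L ∈ BS)
    (hTle : ∀ x ∈ BT, x ≤ L) (hSle : ∀ x ∈ BS, x ≤ L) :
    ∀ j j' : {x : ℕ // x ∈ BT ∪ BS ∧ x < L},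
      (fragGraph BT BS L).Reachable j j' ↔ sameSpan (BT ∩ BS) j.1 j'.1 :=
  stmt7_general L BT BS
end
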